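/- Consider the SIR⁽²⁾S model with vaccination, assume R₀ > 1, and fix η₁ ≥ 0 with c₁+c₂+μ+η₁ − c₁·R₀/2 > 0. Then η_s = D·(R₀−1)/(c₁+c₂+μ+η₁ − c₁·R₀/2), where D = (c₁+μ)·(c₂+μ) + μ·η₁, is the unique nonnegative vaccination rate of susceptibles satisfying R_e(η_s, η₁) = 1. -/

import Mathlib

/-- D = (c₁+μ)(c₂+μ) + μ·η₁. -/
def sir2sD (μ c₁ c₂ η₁ : ℝ) : ℝ := (c₁ + μ) * (c₂ + μ) + μ * η₁

/-- E = D + ηs·(c₁+c₂+μ+η₁). -/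
def sir2sE (μ c₁ c₂ ηs η₁ : ℝ) : ℝ := sir2sD μ c₁ c₂ η₁ + ηs * (c₁ + c₂ + μ + η₁)

/-- Effective reproduction number R_e(ηs, η₁) = R₀·(D + ηs·c₁/2)/E with R₀ = β/(γ+μ). -/
noncomputable def sir2sRe (β γ μ c₁ c₂ ηs η₁ : ℝ) : ℝ :=
  β / (γ + μ) * (sir2sD μ c₁ c₂ η₁ + ηs * c₁ / 2) / sir2sE μ c₁ c₂ ηs η₁

/-
Clearing the denominator E turns `R_e = 1` into the linear equation
`ηs · (c₁ + c₂ + μ + η₁ - c₁ R₀ / 2) = D (R₀ - 1)`, whose leading coefficient is positive by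
hypothesis. The only subtlety is that E must not vanish; for a solution of `R_e = 1` this is
automatic, since `R_e` would otherwise be the junk value `0`.
-/

theorem sir2sD_pos {μ c₁ c₂ η₁ : ℝ} (hμ : 0 < μ) (hc₁ : 0 < c₁) (hc₂ : 0 < c₂) (hη₁ : 0 ≤ η₁) :
    0 < sir2sD μ c₁ c₂ η₁ := by
  unfold sir2sD; positivity

theorem sir2sE_pos {μ c₁ c₂ ηs η₁ : ℝ} (hD : 0 < sir2sD μ c₁ c₂ η₁) (hηs : 0 ≤ ηs)
    (hK : 0 ≤ c₁ + c₂ + μ + η₁) : 0 < sir2sE μ c₁ c₂ ηs η₁ := by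
  unfold sir2sE; positivity

theorem sir2sE_ne_zero_of_sir2sRe_eq_one {β γ μ c₁ c₂ ηs η₁ : ℝ}
    (h : sir2sRe β γ μ c₁ c₂ ηs η₁ = 1) : sir2sE μ c₁ c₂ ηs η₁ ≠ 0 := by
  intro hE
  simp [sir2sRe, hE] at h

theorem sir2sRe_eq_one_iff {β γ μ c₁ c₂ ηs η₁ : ℝ} (hE : sir2sE μ c₁ c₂ ηs η₁ ≠ 0) :
    sir2sRe β γ μ c₁ c₂ ηs η₁ = 1 ↔
      ηs * (c₁ + c₂ + μ + η₁ - c₁ * (β / (γ + μ)) / 2) = sir2sD μ c₁ c₂ η₁ * (β / (γ + μ) - 1) := by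
  rw [sir2sRe, div_eq_one_iff_eq hE, sir2sE]
  constructor <;> intro h <;> linear_combination -h

theorem sir2s_unique_susceptible_vaccination_rate_general
    (β γ μ c₁ c₂ η₁ : ℝ) (hμ : 0 < μ)
    (hc₁ : 0 < c₁) (hc₂ : 0 < c₂) (hη₁ : 0 ≤ η₁)
    (hR0 : 1 < β / (γ + μ))
    (hden : 0 < c₁ + c₂ + μ + η₁ - c₁ * (β / (γ + μ)) / 2)
    (ηs₀ : ℝ)
    (hηs₀ : ηs₀ = sir2sD μ c₁ c₂ η₁ * (β / (γ + μ) - 1) /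
      (c₁ + c₂ + μ + η₁ - c₁ * (β / (γ + μ)) / 2)) :
    0 ≤ ηs₀ ∧ sir2sRe β γ μ c₁ c₂ ηs₀ η₁ = 1 ∧
    (∀ ηs : ℝ, 0 ≤ ηs → sir2sRe β γ μ c₁ c₂ ηs η₁ = 1 → ηs = ηs₀) := by
  have hD := sir2sD_pos hμ hc₁ hc₂ hη₁
  have hηs₀_nonneg : 0 ≤ ηs₀ := hηs₀ ▸ div_nonneg (mul_nonneg hD.le (by linarith)) hden.le
  have hηs₀_root : ηs₀ * (c₁ + c₂ + μ + η₁ - c₁ * (β / (γ + μ)) / 2) =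
      sir2sD μ c₁ c₂ η₁ * (β / (γ + μ) - 1) := hηs₀ ▸ div_mul_cancel₀ _ hden.ne'
  refine ⟨hηs₀_nonneg, ?_, fun ηs _ hRe => ?_⟩
  · have hK : 0 ≤ c₁ + c₂ + μ + η₁ := by nlinarith
    exact (sir2sRe_eq_one_iff (sir2sE_pos hD hηs₀_nonneg hK).ne').2 hηs₀_root
  · have hroot := (sir2sRe_eq_one_iff (sir2sE_ne_zero_of_sir2sRe_eq_one hRe)).1 hRe
    exact mul_right_cancel₀ hden.ne' (hroot.trans hηs₀_root.symm)

/-- If R₀ > 1 and η₁ ≥ 0 with c₁+c₂+μ+η₁ − c₁R₀/2 > 0, then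
ηs = D·(R₀−1)/(c₁+c₂+μ+η₁ − c₁R₀/2) is the unique nonnegative vaccination rate of
susceptibles with R_e(ηs, η₁) = 1. -/
theorem sir2s_unique_susceptible_vaccination_rate
    (β γ μ c₁ c₂ η₁ : ℝ) (hβ : 0 < β) (hγ : 0 < γ) (hμ : 0 < μ)
    (hc₁ : 0 < c₁) (hc₂ : 0 < c₂) (hη₁ : 0 ≤ η₁)
    (hR0 : 1 < β / (γ + μ))
    (hden : 0 < c₁ + c₂ + μ + η₁ - c₁ * (β / (γ + μ)) / 2)
    (ηs₀ : ℝ)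
    (hηs₀ : ηs₀ = sir2sD μ c₁ c₂ η₁ * (β / (γ + μ) - 1) /
      (c₁ + c₂ + μ + η₁ - c₁ * (β / (γ + μ)) / 2)) :
    0 ≤ ηs₀ ∧ sir2sRe β γ μ c₁ c₂ ηs₀ η₁ = 1 ∧
    (∀ ηs : ℝ, 0 ≤ ηs → sir2sRe β γ μ c₁ c₂ ηs η₁ = 1 → ηs = ηs₀) :=
  sir2s_unique_susceptible_vaccination_rate_general β γ μ c₁ c₂ η₁ hμ hc₁ hc₂ hη₁ hR0 hden ηs₀ hηs₀
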